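/- arXiv:2405.05334 — 4 statements merged into one kernel-verified Lean document; each statement's English description precedes it below -/
import Mathlib

section
/- Let N be a positive integer and let K be an N×N complex matrix. Then K satisfies the multiplicative constraint K(f ⊙ g) = (K f) ⊙ (K g) for all f, g ∈ ℂ^N if and only if every entry of K is either 0 or 1 and each row of K contains at most one nonzero entry. -/
/-- A matrix `K ∈ ℂ^{N×N}` satisfies the multiplicative constraint
`K (f ⊙ g) = (K f) ⊙ (K g)` for all `f, g ∈ ℂ^N` if and only if every entry of `K` is
`0` or `1` and each row of `K` contains at most one nonzero entry. -/
theorem multiplicative_constraint_iff (N : ℕ) (hN : 0 < N)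
    (K : Matrix (Fin N) (Fin N) ℂ) :
    (∀ f g : Fin N → ℂ, K.mulVec (f * g) = K.mulVec f * K.mulVec g) ↔
      ((∀ i j, K i j = 0 ∨ K i j = 1) ∧
        ∀ i j j', K i j ≠ 0 → K i j' ≠ 0 → j = j') := by
  constructor
  · intro H
    have key : ∀ i j j', K i j * K i j' = ∑ k, K i k * ((Pi.single j 1 : Fin N → ℂ) k * (Pi.single j' 1 : Fin N → ℂ) k) := by
      intro i j j'
      have hs : ∀ j'' : Fin N, ∑ x, K i x * (Pi.single j'' 1 : Fin N → ℂ) x = K i j'' := by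
        intro j''
        rw [Finset.sum_eq_single j'']
        · simp
        · intro k _ hk; simp [Pi.single_apply, hk]
        · simp
      have := congrFun (H (Pi.single j 1) (Pi.single j' 1)) i
      simp only [Matrix.mulVec, dotProduct, Pi.mul_apply] at this
      rw [this, hs, hs]
    constructor
    · intro i j
      have h := key i j j
      rw [Finset.sum_eq_single j] at h
      · simp only [Pi.single_eq_same, mul_one] at h
        have h2 : K i j * (K i j - 1) = 0 := by linear_combination h
        rcases mul_eq_zero.mp h2 with h | h
        · left; exact h
        · right; exact sub_eq_zero.mp h
      · intro k _ hk; simp [Pi.single_apply, hk]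
      · simp
    · intro i j j' hj hj'
      by_contra hne
      have h := key i j j'
      rw [Finset.sum_eq_zero] at h
      · exact hj (mul_eq_zero.mp h |>.resolve_right hj')
      · intro k _
        rcases eq_or_ne k j with rfl | hk
        · simp [Pi.single_apply, Ne.symm hne]
        · simp [Pi.single_apply, hk]
  · rintro ⟨h01, hrow⟩ f g
    funext i
    simp only [Matrix.mulVec, dotProduct, Pi.mul_apply]
    by_cases hzero : ∀ j, K i j = 0
    · simp [hzero]
    · push_neg at hzero
      obtain ⟨j0, hj0⟩ := hzero
      have hone : K i j0 = 1 := (h01 i j0).resolve_left hj0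
      have hsum : ∀ v : Fin N → ℂ, ∑ j, K i j * v j = v j0 := by
        intro v
        rw [Finset.sum_eq_single j0]
        · rw [hone, one_mul]
        · intro k _ hk
          by_cases hKk : K i k = 0
          · simp [hKk]
          · exact absurd (hrow i k j0 hKk hj0) hk
        · simp
      rw [hsum, hsum, hsum]
end

section
/- Let N be a positive integer, ω an N×N matrix of nonnegative real numbers, and G_j = Σ_{k=1}^N ω_{j,k} > 0 for all j. Fix a row index i. Then the minimum of the per-row cost c_i(k) = Σ_{j=1}^N ω_{i,j} [ (1/G_j)(1 − k_j)² + Σ_{j̃ ≠ j} (1/G_{j̃}) k_{j̃}² ] over all vectors k ∈ {0,1}^N having at most one nonzero entry equals Σ_{j=1}^N ω_{i,j}/G_j + min( 0, min_{1≤j₀≤N} (G_i − 2ω_{i,j₀})/G_{j₀} ). -/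
/-- The per-row MultDMD cost of a candidate row vector `k ∈ ℝ^N` for row `i`. -/
noncomputable def perRowCost (N : ℕ) (ω : Matrix (Fin N) (Fin N) ℝ) (G : Fin N → ℝ)
    (i : Fin N) (k : Fin N → ℝ) : ℝ :=
  ∑ j, ω i j * ((1 / G j) * (1 - k j) ^ 2 +
    ∑ j' ∈ Finset.univ.filter (fun j' => j' ≠ j), (1 / G j') * (k j') ^ 2)

lemma perRowCost_zero (N : ℕ) (ω : Matrix (Fin N) (Fin N) ℝ) (G : Fin N → ℝ) (i : Fin N) :
    perRowCost N ω G i (fun _ => 0) = ∑ j, ω i j / G j := by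
  unfold perRowCost
  refine Finset.sum_congr rfl fun j _ => ?_
  simp [div_eq_mul_inv, mul_comm]

lemma perRowCost_single (N : ℕ) (ω : Matrix (Fin N) (Fin N) ℝ) (G : Fin N → ℝ)
    (hGdef : ∀ p, G p = ∑ q, ω p q) (hGpos : ∀ p, 0 < G p) (i j₀ : Fin N) :
    perRowCost N ω G i (fun q => if q = j₀ then 1 else 0) =
      (∑ j, ω i j / G j) + (G i - 2 * ω i j₀) / G j₀ := by
  have hg : G j₀ ≠ 0 := (hGpos j₀).ne'
  have key : ∀ j : Fin N,
      ω i j * ((1 / G j) * (1 - (if j = j₀ then (1:ℝ) else 0)) ^ 2 +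
        ∑ j' ∈ Finset.univ.filter (fun j' => j' ≠ j),
          (1 / G j') * ((if j' = j₀ then (1:ℝ) else 0)) ^ 2) =
      if j = j₀ then 0 else ω i j / G j + ω i j / G j₀ := by
    intro j
    have hinner : ∑ j' ∈ Finset.univ.filter (fun j' => j' ≠ j),
        (1 / G j') * ((if j' = j₀ then (1:ℝ) else 0)) ^ 2 =
        if j₀ ≠ j then 1 / G j₀ else 0 := by
      rw [show (fun j' => (1 / G j') * ((if j' = j₀ then (1:ℝ) else 0)) ^ 2) =
          (fun j' => if j' = j₀ then 1 / G j' else 0) from funext fun j' => by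
            by_cases h : j' = j₀ <;> simp [h]]
      rw [Finset.sum_ite_eq' (Finset.univ.filter (fun j' => j' ≠ j)) j₀ (fun j' => 1 / G j')]
      simp
    rw [hinner]
    by_cases h : j = j₀
    · subst h; simp
    · simp only [if_neg h, if_pos (Ne.symm h)]
      field_simp
      ring
  unfold perRowCost
  rw [Finset.sum_congr rfl fun j _ => key j]
  rw [← Finset.sum_erase_add _ _ (Finset.mem_univ j₀), if_pos rfl, add_zero]
  have h1 : ∑ j ∈ Finset.univ.erase j₀,
      (if j = j₀ then (0:ℝ) else ω i j / G j + ω i j / G j₀) =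
      ∑ j ∈ Finset.univ.erase j₀, (ω i j / G j + ω i j / G j₀) := by
    refine Finset.sum_congr rfl fun j hj => ?_
    rw [if_neg (Finset.mem_erase.mp hj).1]
  rw [h1, Finset.sum_add_distrib]
  have h2 : ∑ j ∈ Finset.univ.erase j₀, ω i j / G j = (∑ j, ω i j / G j) - ω i j₀ / G j₀ := by
    rw [eq_sub_iff_add_eq, Finset.sum_erase_add _ _ (Finset.mem_univ j₀)]
  have h3 : ∑ j ∈ Finset.univ.erase j₀, ω i j / G j₀ = (G i - ω i j₀) / G j₀ := by
    rw [← Finset.sum_div]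
    congr 1
    rw [eq_sub_iff_add_eq, Finset.sum_erase_add _ _ (Finset.mem_univ j₀), hGdef]
  rw [h2, h3]
  field_simp
  ring

/-- The minimum of the per-row MultDMD cost over all 0-1 vectors with at most one
nonzero entry equals `Σⱼ ω_{i,j}/Gⱼ + min(0, min_{j₀} (Gᵢ − 2ω_{i,j₀})/G_{j₀})`. -/
theorem per_row_cost_min_value (N : ℕ) (hN : 0 < N)
    (ω : Matrix (Fin N) (Fin N) ℝ) (hω : ∀ p q, 0 ≤ ω p q)
    (G : Fin N → ℝ) (hGdef : ∀ p, G p = ∑ q, ω p q) (hGpos : ∀ p, 0 < G p)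
    (i : Fin N) :
    IsLeast
      {v : ℝ | ∃ k : Fin N → ℝ, (∀ q, k q = 0 ∨ k q = 1) ∧
        (∀ p q, k p ≠ 0 → k q ≠ 0 → p = q) ∧ v = perRowCost N ω G i k}
      ((∑ j, ω i j / G j) +
        min 0 (Finset.univ.inf' ⟨⟨0, hN⟩, Finset.mem_univ _⟩
          fun j₀ => (G i - 2 * ω i j₀) / G j₀)) := by
  set S := ∑ j, ω i j / G j with hS
  set f : Fin N → ℝ := fun j₀ => (G i - 2 * ω i j₀) / G j₀ with hf
  set m := Finset.univ.inf' ⟨⟨0, hN⟩, Finset.mem_univ _⟩ f with hm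
  constructor
  · -- membership
    rcases le_or_gt 0 m with h | h
    · rw [min_eq_left h]
      exact ⟨fun _ => 0, fun q => Or.inl rfl, fun p q hp _ => absurd rfl hp,
        by rw [add_zero, perRowCost_zero]⟩
    · rw [min_eq_right h.le]
      obtain ⟨j₀, -, hj₀⟩ := Finset.exists_mem_eq_inf' ⟨⟨0, hN⟩, Finset.mem_univ _⟩ f
      refine ⟨fun q => if q = j₀ then 1 else 0, fun q => by by_cases hq : q = j₀ <;> simp [hq],
        fun p q hp hq => ?_, ?_⟩
      · by_cases hpj : p = j₀
        · by_cases hqj : q = j₀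
          · rw [hpj, hqj]
          · simp [hqj] at hq
        · simp [hpj] at hp
      · rw [perRowCost_single N ω G hGdef hGpos i j₀, ← hS, hm, hj₀]
  · -- lower bound
    rintro v ⟨k, h01, huniq, rfl⟩
    by_cases hz : ∀ q, k q = 0
    · have : k = fun _ => 0 := funext hz
      rw [this, perRowCost_zero, ← hS]
      have : min 0 m ≤ 0 := min_le_left _ _
      linarith
    · push_neg at hz
      obtain ⟨j₀, hj₀⟩ := hz
      have hk : k = fun q => if q = j₀ then 1 else 0 := by
        funext q
        by_cases hq : q = j₀
        · subst hq
          rcases h01 q with h | h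
          · exact absurd h hj₀
          · simp [h]
        · rw [if_neg hq]
          rcases h01 q with h | h
          · exact h
          · exact absurd (huniq q j₀ (by rw [h]; norm_num) hj₀) hq
      rw [hk, perRowCost_single N ω G hGdef hGpos i j₀, ← hS]
      have h1 : m ≤ f j₀ := Finset.inf'_le f (Finset.mem_univ j₀)
      have h2 : min 0 m ≤ m := min_le_right _ _
      simp only [hf] at h1
      linarith
end

section
/- Let N be a positive integer, ω an N×N matrix of nonnegative real numbers, and G_j = Σ_{k=1}^N ω_{j,k} > 0 for all j. Define the objective F(K) = Σ_{i=1}^N Σ_{j=1}^N ω_{i,j} [ (1/G_j)(1 − K_{i,j})² + Σ_{j̃ ≠ j} (1/G_{j̃}) K_{i,j̃}² ] for K ∈ ℝ^{N×N}. For each i, choose j*(i) attaining min_{1≤j≤N} (G_i − 2ω_{i,j})/G_j, and define K* by K*_{i,j} = 1 if j = j*(i) and K*_{i,j} = 0 otherwise. Then F(K*) ≤ F(K) for every matrix K ∈ {0,1}^{N×N} having exactly one entry equal to 1 in each row. -/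
/-- The MultDMD objective `F(K) = Σᵢ cᵢ(Kᵢ)` over matrices `K ∈ ℝ^{N×N}`. -/
noncomputable def multdmdObjective (N : ℕ) (ω : Matrix (Fin N) (Fin N) ℝ)
    (G : Fin N → ℝ) (K : Matrix (Fin N) (Fin N) ℝ) : ℝ :=
  ∑ i, perRowCost N ω G i (K i)


lemma perRowCost_indicator (N : ℕ) (ω : Matrix (Fin N) (Fin N) ℝ) (G : Fin N → ℝ)
    (i j₀ : Fin N) :
    perRowCost N ω G i (fun q => if q = j₀ then 1 else 0)
      = (∑ j, ω i j * (1 / G j)) + (∑ j, ω i j) * (1 / G j₀)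
        - 2 * ω i j₀ * (1 / G j₀) := by
  unfold perRowCost
  have hterm : ∀ j : Fin N,
      ω i j * ((1 / G j) * (1 - (if j = j₀ then (1:ℝ) else 0)) ^ 2 +
        ∑ j' ∈ Finset.univ.filter (fun j' => j' ≠ j),
          (1 / G j') * (if j' = j₀ then (1:ℝ) else 0) ^ 2)
      = ω i j * (1 / G j + 1 / G j₀)
        - (if j = j₀ then ω i j₀ * (1 / G j₀ + 1 / G j₀) else 0) := by
    intro j
    have hinner : (∑ j' ∈ Finset.univ.filter (fun j' => j' ≠ j),
        (1 / G j') * (if j' = j₀ then (1:ℝ) else 0) ^ 2)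
        = if j = j₀ then 0 else 1 / G j₀ := by
      have h1 : ∀ j' : Fin N, (1 / G j') * (if j' = j₀ then (1:ℝ) else 0) ^ 2
          = if j' = j₀ then 1 / G j₀ else 0 := by
        intro j'; split <;> simp [*]
      rw [Finset.sum_congr rfl (fun j' _ => h1 j'), Finset.sum_ite_eq']
      simp [ne_comm, eq_comm]
    rw [hinner]
    by_cases h : j = j₀ <;> simp [h] <;> ring
  rw [Finset.sum_congr rfl (fun j _ => hterm j), Finset.sum_sub_distrib,
    Finset.sum_ite_eq' Finset.univ j₀]
  simp only [mul_add, Finset.sum_add_distrib, ← Finset.sum_mul, one_div,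
    Finset.mem_univ, if_true]
  ring

/-- The matrix `K*` that places, in each row `i`, a single `1` at a column `j*(i)`
minimizing `(Gᵢ − 2ω_{i,j})/Gⱼ` minimizes the MultDMD objective over all 0-1 matrices
having exactly one entry equal to `1` in each row. -/
theorem multdmd_matrix_optimal (N : ℕ) (hN : 0 < N)
    (ω : Matrix (Fin N) (Fin N) ℝ) (hω : ∀ p q, 0 ≤ ω p q)
    (G : Fin N → ℝ) (hGdef : ∀ p, G p = ∑ q, ω p q) (hGpos : ∀ p, 0 < G p)
    (jstar : Fin N → Fin N)
    (hjstar : ∀ i j, (G i - 2 * ω i (jstar i)) / G (jstar i) ≤ (G i - 2 * ω i j) / G j)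
    (Kstar : Matrix (Fin N) (Fin N) ℝ)
    (hKstar : ∀ i q, Kstar i q = if q = jstar i then 1 else 0) :
    ∀ K : Matrix (Fin N) (Fin N) ℝ,
      (∀ i, ∃ j₀ : Fin N, ∀ q, K i q = if q = j₀ then 1 else 0) →
      multdmdObjective N ω G Kstar ≤ multdmdObjective N ω G K := by
  intro K hK
  unfold multdmdObjective
  apply Finset.sum_le_sum
  intro i _
  obtain ⟨j₀, hj₀⟩ := hK i
  have hKs : K i = fun q => if q = j₀ then 1 else 0 := funext hj₀
  have hKstari : Kstar i = fun q => if q = jstar i then 1 else 0 := funext (hKstar i)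
  rw [hKs, hKstari, perRowCost_indicator, perRowCost_indicator]
  have hle := hjstar i j₀
  have h1 : (∑ j, ω i j) * (1 / G (jstar i)) - 2 * ω i (jstar i) * (1 / G (jstar i))
      ≤ (∑ j, ω i j) * (1 / G j₀) - 2 * ω i j₀ * (1 / G j₀) := by
    have e1 : ∀ j : Fin N, (∑ q, ω i q) * (1 / G j) - 2 * ω i j * (1 / G j)
        = (G i - 2 * ω i j) / G j := by
      intro j; rw [← hGdef i]; ring
    rw [e1, e1]; exact hle
  linarith
end

section
/- Let X be a complex Hilbert space. Let (A_n) and (P_n) be sequences of bounded linear operators on X and A, P bounded linear operators on X such that: (i) A_n* A_n = A_n A_n* = P_n and P_n² = P_n for all n; (ii) A* A = A A* = P and P² = P; (iii) P_n x → P x in norm for every x ∈ X; and (iv) ⟨A_n x, y⟩ → ⟨A x, y⟩ for all x, y ∈ X. Then for every natural number m and every x ∈ X, A_n^m x → A^m x in norm and (A_n*)^m x → (A*)^m x in norm. -/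
/-!
A partial isometry `B` satisfies `‖B x‖ = ‖(B* B) x‖` and `‖B‖ ≤ 1`. Strong convergence of the
projections `Pₙ = Aₙ* Aₙ = Aₙ Aₙ*` therefore gives `‖Aₙ x‖ → ‖A x‖` and `‖Aₙ* x‖ → ‖A* x‖`, and in a
Hilbert space weak convergence together with convergence of norms is strong convergence. Strong
convergence of a uniformly bounded sequence of operators passes to products, hence to powers.
-/

open Filter ContinuousLinearMap Topology
open scoped InnerProductSpace

section StrongConvergence

variable {ι 𝕜 E F G : Type*} [NontriviallyNormedField 𝕜]
  [SeminormedAddCommGroup E] [NormedSpace 𝕜 E] [SeminormedAddCommGroup F] [NormedSpace 𝕜 F]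
  [SeminormedAddCommGroup G] [NormedSpace 𝕜 G] {l : Filter ι}

theorem tendsto_comp_apply_of_norm_le {B : ι → F →L[𝕜] G} {C : ι → E →L[𝕜] F}
    {B₀ : F →L[𝕜] G} {C₀ : E →L[𝕜] F} {K : ℝ} (hK : ∀ i, ‖B i‖ ≤ K)
    (hB : ∀ y, Tendsto (fun i => B i y) l (𝓝 (B₀ y)))
    (hC : ∀ x, Tendsto (fun i => C i x) l (𝓝 (C₀ x))) (x : E) :
    Tendsto (fun i => (B i).comp (C i) x) l (𝓝 (B₀.comp C₀ x)) := by
  rw [tendsto_iff_norm_sub_tendsto_zero]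
  have hbound : ∀ i, ‖B i (C i x) - B₀ (C₀ x)‖ ≤
      K * ‖C i x - C₀ x‖ + ‖B i (C₀ x) - B₀ (C₀ x)‖ := fun i =>
    calc ‖B i (C i x) - B₀ (C₀ x)‖
        ≤ ‖B i (C i x - C₀ x)‖ + ‖B i (C₀ x) - B₀ (C₀ x)‖ := by
          rw [map_sub]; exact norm_sub_le_norm_sub_add_norm_sub _ _ _
      _ ≤ K * ‖C i x - C₀ x‖ + ‖B i (C₀ x) - B₀ (C₀ x)‖ := by
          gcongr; exact (B i).le_of_opNorm_le (hK i) _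
  have hlim := ((tendsto_iff_norm_sub_tendsto_zero.mp (hC x)).const_mul K).add
    (tendsto_iff_norm_sub_tendsto_zero.mp (hB (C₀ x)))
  rw [mul_zero, add_zero] at hlim
  exact squeeze_zero (fun _ => norm_nonneg _) hbound hlim

theorem tendsto_pow_apply_of_norm_le {B : ι → E →L[𝕜] E} {B₀ : E →L[𝕜] E} {K : ℝ}
    (hK : ∀ i, ‖B i‖ ≤ K) (hB : ∀ x, Tendsto (fun i => B i x) l (𝓝 (B₀ x))) (m : ℕ) (x : E) :
    Tendsto (fun i => (B i ^ m) x) l (𝓝 ((B₀ ^ m) x)) := by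
  induction m generalizing x with
  | zero => simpa using tendsto_const_nhds
  | succ k ih => simpa only [pow_succ', mul_def] using tendsto_comp_apply_of_norm_le hK hB ih x

end StrongConvergence

theorem norm_le_one_of_isIdempotentElem_star_mul_self {R : Type*} [NonUnitalNormedRing R]
    [StarRing R] [CStarRing R] {a : R} (ha : IsIdempotentElem (star a * a)) : ‖a‖ ≤ 1 := by
  have h : ‖a‖ * ‖a‖ ≤ 1 := by
    rw [← CStarRing.norm_star_mul_self]
    exact IsStarProjection.norm_le _ ⟨ha, .star_mul_self a⟩
  nlinarith [norm_nonneg a]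

section InnerProductSpace

variable {ι 𝕜 E : Type*} [RCLike 𝕜] {l : Filter ι}

theorem tendsto_of_tendsto_inner_of_tendsto_norm [SeminormedAddCommGroup E]
    [InnerProductSpace 𝕜 E] {u : ι → E} {v : E}
    (hinner : Tendsto (fun i => ⟪u i, v⟫_𝕜) l (𝓝 ⟪v, v⟫_𝕜))
    (hnorm : Tendsto (fun i => ‖u i‖) l (𝓝 ‖v‖)) : Tendsto u l (𝓝 v) := by
  have hsq : Tendsto (fun i => ‖u i - v‖ ^ 2) l (𝓝 0) := by
    have h := ((hnorm.pow 2).sub ((RCLike.continuous_re.tendsto _).comp hinner |>.const_mul 2)).add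
      (tendsto_const_nhds (x := ‖v‖ ^ 2))
    simp only [Function.comp_def, inner_self_eq_norm_sq] at h
    simpa only [norm_sub_sq (𝕜 := 𝕜), show ‖v‖ ^ 2 - 2 * ‖v‖ ^ 2 + ‖v‖ ^ 2 = 0 by ring] using h
  rw [tendsto_iff_norm_sub_tendsto_zero]
  simpa [Real.sqrt_sq (norm_nonneg _)] using hsq.sqrt

variable [NormedAddCommGroup E] [InnerProductSpace 𝕜 E] [CompleteSpace E]

theorem tendsto_inner_adjoint_apply {B : ι → E →L[𝕜] E} {B₀ : E →L[𝕜] E}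
    (hB : ∀ x y, Tendsto (fun i => ⟪B i x, y⟫_𝕜) l (𝓝 ⟪B₀ x, y⟫_𝕜)) (x y : E) :
    Tendsto (fun i => ⟪adjoint (B i) x, y⟫_𝕜) l (𝓝 ⟪adjoint B₀ x, y⟫_𝕜) := by
  simpa only [adjoint_inner_left, RCLike.star_def, inner_conj_symm] using (hB y x).star

theorem norm_apply_eq_of_adjoint_mul_self_eq {B Q : E →L[𝕜] E} (hBQ : adjoint B * B = Q)
    (hQ : IsIdempotentElem Q) (x : E) : ‖B x‖ = ‖Q x‖ := by
  have hQsa : adjoint Q = Q := by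
    rw [← hBQ, ← star_eq_adjoint, ← star_eq_adjoint]; exact IsSelfAdjoint.star_mul_self B
  have hsq : ‖B x‖ ^ 2 = ‖Q x‖ ^ 2 := by
    rw [apply_norm_sq_eq_inner_adjoint_left, apply_norm_sq_eq_inner_adjoint_left, hQsa]
    change RCLike.re ⟪(adjoint B * B) x, x⟫_𝕜 = RCLike.re ⟪(Q * Q) x, x⟫_𝕜
    rw [hBQ, hQ.eq]
  exact (pow_left_inj₀ (norm_nonneg _) (norm_nonneg _) two_ne_zero).mp hsq

theorem tendsto_pow_apply_of_adjoint_mul_self_tendsto {B Q : ι → E →L[𝕜] E}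
    {B₀ Q₀ : E →L[𝕜] E} (hBQ : ∀ i, adjoint (B i) * B i = Q i) (hBQ₀ : adjoint B₀ * B₀ = Q₀)
    (hQ : ∀ i, IsIdempotentElem (Q i)) (hQ₀ : IsIdempotentElem Q₀)
    (hQlim : ∀ x, Tendsto (fun i => Q i x) l (𝓝 (Q₀ x)))
    (hBweak : ∀ x y, Tendsto (fun i => ⟪B i x, y⟫_𝕜) l (𝓝 ⟪B₀ x, y⟫_𝕜)) (m : ℕ) (x : E) :
    Tendsto (fun i => (B i ^ m) x) l (𝓝 ((B₀ ^ m) x)) := by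
  have hnorm : ∀ x, Tendsto (fun i => ‖B i x‖) l (𝓝 ‖B₀ x‖) := fun x => by
    simpa only [norm_apply_eq_of_adjoint_mul_self_eq (hBQ _) (hQ _),
      norm_apply_eq_of_adjoint_mul_self_eq hBQ₀ hQ₀] using (hQlim x).norm
  have hcontr : ∀ i, ‖B i‖ ≤ 1 := fun i =>
    norm_le_one_of_isIdempotentElem_star_mul_self (by rw [star_eq_adjoint, hBQ]; exact hQ i)
  exact tendsto_pow_apply_of_norm_le hcontr
    (fun x => tendsto_of_tendsto_inner_of_tendsto_norm (hBweak x (B₀ x)) (hnorm x)) m x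

end InnerProductSpace

/-- Suppose `Aₙ* Aₙ = Aₙ Aₙ* = Pₙ` with `Pₙ² = Pₙ`, and similarly for limit operators
`A, P`, that `Pₙ → P` strongly and `Aₙ → A` in the weak operator topology. Then for
every `m ∈ ℕ`, `Aₙᵐ → Aᵐ` and `(Aₙ*)ᵐ → (A*)ᵐ` strongly. -/
theorem partial_isometry_powers_strong_convergence
    {X : Type*} [NormedAddCommGroup X] [InnerProductSpace ℂ X] [CompleteSpace X]
    (A P : ℕ → (X →L[ℂ] X)) (A₀ P₀ : X →L[ℂ] X)
    (h₁ : ∀ n, adjoint (A n) * A n = P n ∧ A n * adjoint (A n) = P n ∧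
      P n * P n = P n)
    (h₂ : adjoint A₀ * A₀ = P₀ ∧ A₀ * adjoint A₀ = P₀ ∧ P₀ * P₀ = P₀)
    (hPstrong : ∀ x : X, Tendsto (fun n => (P n) x) atTop (nhds (P₀ x)))
    (hAweak : ∀ x y : X, Tendsto (fun n => (inner ℂ ((A n) x) y : ℂ)) atTop
      (nhds (inner ℂ (A₀ x) y))) :
    ∀ (m : ℕ) (x : X),
      Tendsto (fun n => ((A n) ^ m) x) atTop (nhds ((A₀ ^ m) x)) ∧
      Tendsto (fun n => ((adjoint (A n)) ^ m) x) atTop (nhds (((adjoint A₀) ^ m) x)) := by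
  obtain ⟨hA₀, hA₀', hP₀⟩ := h₂
  intro m x
  constructor
  · exact tendsto_pow_apply_of_adjoint_mul_self_tendsto (fun n => (h₁ n).1) hA₀
      (fun n => (h₁ n).2.2) hP₀ hPstrong hAweak m x
  · exact tendsto_pow_apply_of_adjoint_mul_self_tendsto
      (fun n => by rw [adjoint_adjoint]; exact (h₁ n).2.1) (by rw [adjoint_adjoint]; exact hA₀')
      (fun n => (h₁ n).2.2) hP₀ hPstrong (tendsto_inner_adjoint_apply hAweak) m x
end
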